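/- Fix t ∈ (0,1) and let F₁ : [0,1] → [0,1] be a CDF. Define h(x) = x · F₁(t x/(1-x)) for x ∈ (0,1) with t x/(1-x) ≤ 1. If F₁ is the CDF of the standard normal two-sided p-value under a mean shift μ > 0, i.e., F₁(p) = 1 - Φ(Φ⁻¹(1 - p/2) - μ) + Φ(-Φ⁻¹(1 - p/2) - μ), then F₁ is concave on (0,1). -/

import Mathlib

open ProbabilityTheory MeasureTheory Set Filter Topology Real

namespace NormalPvalueAux

noncomputable def G : ℝ → ℝ := gaussianPDFReal 0 1

noncomputable def Phi : ℝ → ℝ := fun x => cdf (gaussianReal 0 1) x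

lemma G_pos (x : ℝ) : 0 < G x := gaussianPDFReal_pos 0 1 x one_ne_zero

lemma G_eq (x : ℝ) : G x = (Real.sqrt (2 * Real.pi))⁻¹ * Real.exp (-x ^ 2 / 2) := by
  simp only [G, gaussianPDFReal, NNReal.coe_one, mul_one, sub_zero]

lemma G_cont : Continuous G := by
  have : G = fun x => (Real.sqrt (2 * Real.pi))⁻¹ * Real.exp (-x ^ 2 / 2) :=
    funext G_eq
  rw [this]
  fun_prop

lemma G_integrable : Integrable G := integrable_gaussianPDFReal 0 1

lemma G_neg (x : ℝ) : G (-x) = G x := by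
  rw [G_eq, G_eq, neg_sq]

lemma integral_G : ∫ x, G x = 1 := integral_gaussianPDFReal_eq_one 0 one_ne_zero

lemma Phi_eq_integral (x : ℝ) : Phi x = ∫ t in Iic x, G t := by
  rw [Phi, cdf_eq_real, measureReal_def, gaussianReal_apply_eq_integral 0 one_ne_zero,
    ENNReal.toReal_ofReal (integral_nonneg fun t => gaussianPDFReal_nonneg 0 1 t)]
  rfl

lemma Phi_hasDerivAt (x : ℝ) : HasDerivAt Phi (G x) x := by
  have h : ∀ y, Phi y = (∫ t in (0:ℝ)..y, G t) + Phi 0 := by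
    intro y
    rw [Phi_eq_integral, Phi_eq_integral,
      ← intervalIntegral.integral_Iic_sub_Iic (G_integrable.integrableOn)
        (G_integrable.integrableOn)]
    ring
  have hd : HasDerivAt (fun y => (∫ t in (0:ℝ)..y, G t) + Phi 0) (G x) x := by
    exact (intervalIntegral.integral_hasDerivAt_right
      (G_integrable.intervalIntegrable)
      (G_cont.stronglyMeasurableAtFilter _ _) G_cont.continuousAt).add_const _
  exact hd.congr_of_eventuallyEq (Filter.Eventually.of_forall h)

lemma Phi_continuous : Continuous Phi :=
  continuous_iff_continuousAt.2 fun x => (Phi_hasDerivAt x).continuousAt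

lemma Phi_strictMono : StrictMono Phi :=
  strictMono_of_deriv_pos fun x => by
    rw [(Phi_hasDerivAt x).deriv]; exact G_pos x

lemma Phi_mem_Ioo (x : ℝ) : Phi x ∈ Ioo (0:ℝ) 1 := by
  constructor
  · exact lt_of_le_of_lt (cdf_nonneg _ (x - 1)) (Phi_strictMono (by linarith))
  · exact lt_of_lt_of_le (Phi_strictMono (show x < x + 1 by linarith))
      (cdf_le_one _ (x + 1))

lemma Phi_surjOn {p : ℝ} (hp : p ∈ Ioo (0:ℝ) 1) : ∃ x, Phi x = p := by
  obtain ⟨a, ha⟩ : ∃ a, Phi a < p := by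
    have := (tendsto_cdf_atBot (gaussianReal 0 1)).eventually_lt_const hp.1
    exact this.exists
  obtain ⟨b, hb⟩ : ∃ b, p < Phi b := by
    have := (tendsto_cdf_atTop (gaussianReal 0 1)).eventually_const_lt hp.2
    exact this.exists
  have hab : a ≤ b := by
    by_contra h
    exact absurd (Phi_strictMono.monotone (le_of_not_ge h)) (by linarith)
  obtain ⟨x, _, hx⟩ := intermediate_value_Icc hab Phi_continuous.continuousOn
    ⟨ha.le, hb.le⟩
  exact ⟨x, hx⟩

lemma Phi_zero : Phi 0 = 1 / 2 := by
  have h1 : (∫ t in Iic (0:ℝ), G t) + ∫ t in Ioi (0:ℝ), G t = 1 := by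
    rw [intervalIntegral.integral_Iic_add_Ioi G_integrable.integrableOn
      G_integrable.integrableOn, integral_G]
  have h2 : (∫ t in Iic (0:ℝ), G t) = ∫ t in Ioi (0:ℝ), G t := by
    rw [← neg_zero, ← integral_comp_neg_Iic]
    simp only [G_neg, neg_zero]
  rw [Phi_eq_integral]
  linarith

end NormalPvalueAux

open NormalPvalueAux

/-- The non-null CDF of the two-sided normal p-value under a mean shift μ > 0 is concave
on (0,1). Here Φ is the standard normal CDF and Φ⁻¹ its inverse. -/
theorem normal_pvalue_cdf_concave (μ : ℝ) (hμ : 0 < μ)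
    (Φ Φinv F1 : ℝ → ℝ)
    (hΦ : Φ = fun x => cdf (gaussianReal 0 1) x)
    (hΦinv : Φinv = Function.invFun Φ)
    (hF1 : F1 = fun p => 1 - Φ (Φinv (1 - p / 2) - μ) + Φ (-Φinv (1 - p / 2) - μ)) :
    ConcaveOn ℝ (Set.Ioo (0 : ℝ) 1) F1 := by
  have hPhi : Φ = Phi := hΦ
  subst hPhi
  -- basic facts about the inverse
  have hinv_left : ∀ x, Φinv (Phi x) = x := by
    intro x
    rw [hΦinv]
    exact Function.leftInverse_invFun Phi_strictMono.injective x
  have hinv_right : ∀ p ∈ Ioo (0:ℝ) 1, Phi (Φinv p) = p := by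
    intro p hp
    obtain ⟨x, hx⟩ := Phi_surjOn hp
    rw [← hx, hinv_left]
  have hinv_mono : StrictMonoOn Φinv (Ioo (0:ℝ) 1) := by
    intro a ha b hb hab
    have := Phi_strictMono.lt_iff_lt (a := Φinv a) (b := Φinv b)
    rw [hinv_right a ha, hinv_right b hb] at this
    exact this.1 hab
  have himg : Φinv '' (Ioo (0:ℝ) 1) = univ := by
    ext x
    simp only [mem_univ, iff_true, mem_image]
    exact ⟨Phi x, Phi_mem_Ioo x, hinv_left x⟩
  have hinv_cont : ∀ p ∈ Ioo (0:ℝ) 1, ContinuousAt Φinv p := by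
    intro p hp
    refine hinv_mono.continuousAt_of_image_mem_nhds
      (isOpen_Ioo.mem_nhds hp) ?_
    rw [himg]
    exact univ_mem
  have hinv_deriv : ∀ p ∈ Ioo (0:ℝ) 1, HasDerivAt Φinv (G (Φinv p))⁻¹ p := by
    intro p hp
    refine HasDerivAt.of_local_left_inverse (hinv_cont p hp)
      (Phi_hasDerivAt (Φinv p)) (G_pos _).ne' ?_
    filter_upwards [isOpen_Ioo.mem_nhds hp] with y hy using hinv_right y hy
  -- q(p) := Φinv (1 - p / 2) lands in Ioo (1/2) 1 for p ∈ Ioo 0 1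
  have hhalf : ∀ p ∈ Ioo (0:ℝ) 1, (1 - p / 2) ∈ Ioo (0:ℝ) 1 := by
    rintro p ⟨h1, h2⟩; constructor <;> [linarith; linarith]
  have hq_pos : ∀ p ∈ Ioo (0:ℝ) 1, 0 < Φinv (1 - p / 2) := by
    rintro p hp
    have h := hinv_right _ (hhalf p hp)
    have : Phi 0 < Phi (Φinv (1 - p / 2)) := by
      rw [h, Phi_zero]; obtain ⟨h1, h2⟩ := hp; linarith
    exact Phi_strictMono.lt_iff_lt.1 this
  -- derivative of F1
  have hF1deriv : ∀ p ∈ Ioo (0:ℝ) 1,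
      HasDerivAt F1 (Real.exp (-μ^2/2) * Real.cosh (μ * Φinv (1 - p / 2))) p := by
    intro p hp
    set q := Φinv (1 - p / 2) with hq
    have hin : HasDerivAt (fun y : ℝ => 1 - y / 2) (-(1/2)) p := by
      simpa using ((hasDerivAt_id p).div_const 2).const_sub 1
    have hQ : HasDerivAt (fun y : ℝ => Φinv (1 - y / 2)) ((G q)⁻¹ * (-(1/2))) p :=
      (hinv_deriv _ (hhalf p hp)).comp p hin
    have h1 : HasDerivAt (fun y : ℝ => Phi (Φinv (1 - y / 2) - μ))
        (G (q - μ) * ((G q)⁻¹ * (-(1/2)))) p := by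
      have := ((Phi_hasDerivAt (q - μ)).comp p (hQ.sub_const μ))
      simpa [Function.comp_def] using this
    have h2 : HasDerivAt (fun y : ℝ => Phi (-Φinv (1 - y / 2) - μ))
        (G (-q - μ) * -((G q)⁻¹ * (-(1/2)))) p := by
      have := ((Phi_hasDerivAt (-q - μ)).comp p ((hQ.neg).sub_const μ))
      simpa [Function.comp_def] using this
    have hd : HasDerivAt F1
        (-(G (q - μ) * ((G q)⁻¹ * (-(1/2)))) + G (-q - μ) * -((G q)⁻¹ * (-(1/2)))) p := by
      rw [hF1]
      exact ((h1.const_sub 1).add h2)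
    convert hd using 1
    -- algebraic identity
    have key1 : Real.exp (-(q - μ)^2/2)
        = Real.exp (-q^2/2) * (Real.exp (μ*q) * Real.exp (-μ^2/2)) := by
      rw [← Real.exp_add, ← Real.exp_add]; congr 1; ring
    have key2 : Real.exp (-(-q - μ)^2/2)
        = Real.exp (-q^2/2) * (Real.exp (-(μ*q)) * Real.exp (-μ^2/2)) := by
      rw [← Real.exp_add, ← Real.exp_add]; congr 1; ring
    rw [G_eq, G_eq, G_eq, Real.cosh_eq, key1, key2]
    have he : Real.exp (-q^2/2) ≠ 0 := Real.exp_ne_zero _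
    have hs : Real.sqrt (2 * Real.pi) ≠ 0 :=
      ne_of_gt (Real.sqrt_pos.2 (by positivity))
    field_simp
  -- concavity via antitone derivative
  have hderiv_eq : ∀ p ∈ Ioo (0:ℝ) 1,
      deriv F1 p = Real.exp (-μ^2/2) * Real.cosh (μ * Φinv (1 - p / 2)) :=
    fun p hp => (hF1deriv p hp).deriv
  refine AntitoneOn.concaveOn_of_deriv (convex_Ioo 0 1) ?_ ?_ ?_
  · intro p hp
    exact ((hF1deriv p hp).continuousAt).continuousWithinAt
  · rw [interior_Ioo]
    intro p hp
    exact ((hF1deriv p hp).differentiableAt).differentiableWithinAt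
  · rw [interior_Ioo]
    intro a ha b hb hab
    rw [hderiv_eq a ha, hderiv_eq b hb]
    have hqa := hq_pos a ha
    have hqb := hq_pos b hb
    have hmono : Φinv (1 - b / 2) ≤ Φinv (1 - a / 2) := by
      rcases eq_or_lt_of_le hab with h | h
      · rw [h]
      · exact (hinv_mono (hhalf b hb) (hhalf a ha) (by linarith)).le
    have : Real.cosh (μ * Φinv (1 - b / 2)) ≤ Real.cosh (μ * Φinv (1 - a / 2)) := by
      rw [Real.cosh_le_cosh]
      rw [abs_of_pos (by positivity), abs_of_pos (by positivity)]
      exact mul_le_mul_of_nonneg_left hmono hμ.le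
    exact mul_le_mul_of_nonneg_left this (Real.exp_nonneg _)
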